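/- arXiv:2009.01632 — 7 statements merged into one kernel-verified Lean document; each statement's English description precedes it below -/
import Mathlib

section
/- Let a > 0 be a real number and define φ : ℝ × ℝ → ℝ by φ(t,e) := t·log(1 + a·e/t) for t > 0 and φ(t,e) := 0 for t ≤ 0. Then φ is concave on the set {(t,e) ∈ ℝ × ℝ : t ≥ 0 and e ≥ 0}. -/
/-!
`φ` is the perspective `(t, e) ↦ t * g (e / t)` of the concave, nondecreasing function
`g x = log (1 + a x)`. Being positively homogeneous, `φ` is concave on the quadrant as soon as it
is superadditive there. For `t₁, t₂ > 0` superadditivity is concavity of `g` at the weights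
`t₁ / (t₁ + t₂)` and `t₂ / (t₁ + t₂)`; if one of the times is `0`, its term vanishes and only the
monotonicity of `g` in the energy is needed.
-/

open Real Set

noncomputable def perspective (g : ℝ → ℝ) (p : ℝ × ℝ) : ℝ :=
  if 0 < p.1 then p.1 * g (p.2 / p.1) else 0

section Perspective

variable {g : ℝ → ℝ}

theorem perspective_smul (g : ℝ → ℝ) {c : ℝ} (hc : 0 ≤ c) (p : ℝ × ℝ) :
    perspective g (c • p) = c * perspective g p := by
  rcases hc.eq_or_lt with rfl | hc
  · simp [perspective]
  by_cases hp : 0 < p.1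
  · have hcp : 0 < c * p.1 := mul_pos hc hp
    simp only [perspective, Prod.smul_fst, Prod.smul_snd, smul_eq_mul, if_pos hp, if_pos hcp,
      mul_div_mul_left _ _ hc.ne']
    ring
  · simp [perspective, hp, mul_pos_iff_of_pos_left hc]

theorem perspective_mk_le_perspective_mk (hmono : MonotoneOn g (Ici 0)) (t : ℝ) {e e' : ℝ}
    (he : 0 ≤ e) (hee' : e ≤ e') : perspective g (t, e) ≤ perspective g (t, e') := by
  unfold perspective
  split_ifs with ht
  · exact mul_le_mul_of_nonneg_left
      (hmono (div_nonneg he ht.le) (div_nonneg (he.trans hee') ht.le)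
        (div_le_div_of_nonneg_right hee' ht.le)) ht.le
  · exact le_rfl

theorem perspective_add_le_of_pos (hconc : ConcaveOn ℝ (Ici 0) g) {t₁ t₂ e₁ e₂ : ℝ}
    (ht₁ : 0 < t₁) (ht₂ : 0 < t₂) (he₁ : 0 ≤ e₁) (he₂ : 0 ≤ e₂) :
    perspective g (t₁, e₁) + perspective g (t₂, e₂) ≤ perspective g (t₁ + t₂, e₁ + e₂) := by
  have hT : 0 < t₁ + t₂ := add_pos ht₁ ht₂
  simp only [perspective, if_pos ht₁, if_pos ht₂, if_pos hT]
  have hw : t₁ / (t₁ + t₂) + t₂ / (t₁ + t₂) = 1 := by field_simp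
  have hg := hconc.2 (div_nonneg he₁ ht₁.le : e₁ / t₁ ∈ Ici 0)
    (div_nonneg he₂ ht₂.le : e₂ / t₂ ∈ Ici 0) (div_nonneg ht₁.le hT.le) (div_nonneg ht₂.le hT.le) hw
  have hmix : t₁ / (t₁ + t₂) * (e₁ / t₁) + t₂ / (t₁ + t₂) * (e₂ / t₂) = (e₁ + e₂) / (t₁ + t₂) := by
    field_simp
  simp only [smul_eq_mul, hmix] at hg
  calc t₁ * g (e₁ / t₁) + t₂ * g (e₂ / t₂)
      = (t₁ + t₂) * (t₁ / (t₁ + t₂) * g (e₁ / t₁) + t₂ / (t₁ + t₂) * g (e₂ / t₂)) := by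
        field_simp
    _ ≤ (t₁ + t₂) * g ((e₁ + e₂) / (t₁ + t₂)) := mul_le_mul_of_nonneg_left hg hT.le

theorem perspective_add_le (hconc : ConcaveOn ℝ (Ici 0) g) (hmono : MonotoneOn g (Ici 0))
    {u v : ℝ × ℝ} (hu : 0 ≤ u.1 ∧ 0 ≤ u.2) (hv : 0 ≤ v.1 ∧ 0 ≤ v.2) :
    perspective g u + perspective g v ≤ perspective g (u + v) := by
  obtain ⟨t₁, e₁⟩ := u
  obtain ⟨t₂, e₂⟩ := v
  obtain ⟨ht₁ : 0 ≤ t₁, he₁ : 0 ≤ e₁⟩ := hu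
  obtain ⟨ht₂ : 0 ≤ t₂, he₂ : 0 ≤ e₂⟩ := hv
  rw [Prod.mk_add_mk]
  rcases ht₁.eq_or_lt with rfl | ht₁
  · simpa [perspective] using
      perspective_mk_le_perspective_mk hmono t₂ he₂ (le_add_of_nonneg_left he₁)
  rcases ht₂.eq_or_lt with rfl | ht₂
  · simpa [perspective] using
      perspective_mk_le_perspective_mk hmono t₁ he₁ (le_add_of_nonneg_right he₂)
  exact perspective_add_le_of_pos hconc ht₁ ht₂ he₁ he₂

theorem concaveOn_perspective (hconc : ConcaveOn ℝ (Ici 0) g) (hmono : MonotoneOn g (Ici 0)) :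
    ConcaveOn ℝ {p : ℝ × ℝ | 0 ≤ p.1 ∧ 0 ≤ p.2} (perspective g) := by
  refine ⟨(convex_Ici 0).prod (convex_Ici 0), fun p hp q hq c d hc hd _ ↦ ?_⟩
  have hmem : ∀ {c : ℝ} {p : ℝ × ℝ}, 0 ≤ c → 0 ≤ p.1 ∧ 0 ≤ p.2 → 0 ≤ (c • p).1 ∧ 0 ≤ (c • p).2 :=
    fun hc hp ↦ ⟨mul_nonneg hc hp.1, mul_nonneg hc hp.2⟩
  simpa only [smul_eq_mul, perspective_smul g hc, perspective_smul g hd] using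
    perspective_add_le hconc hmono (hmem hc hp) (hmem hd hq)

end Perspective

theorem concaveOn_log_one_add_mul {a : ℝ} (ha : 0 ≤ a) :
    ConcaveOn ℝ (Ici 0) fun x ↦ log (1 + a * x) := by
  refine ⟨convex_Ici 0, fun x hx y hy c d hc hd hcd ↦ ?_⟩
  have hx' : (0 : ℝ) < 1 + a * x := by have := mul_nonneg ha hx.out; linarith
  have hy' : (0 : ℝ) < 1 + a * y := by have := mul_nonneg ha hy.out; linarith
  convert strictConcaveOn_log_Ioi.concaveOn.2 hx' hy' hc hd hcd using 2
  simp only [smul_eq_mul]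
  linear_combination -hcd

theorem monotoneOn_log_one_add_mul {a : ℝ} (ha : 0 ≤ a) :
    MonotoneOn (fun x ↦ log (1 + a * x)) (Ici 0) := fun x hx _ _ hxy ↦
  log_le_log (by have := mul_nonneg ha hx.out; linarith) (by gcongr)

/-- For `a > 0`, the function `φ(t,e) = t·log(1 + a·e/t)` for `t > 0`,
`φ(t,e) = 0` for `t ≤ 0`, is concave on `{(t,e) : t ≥ 0, e ≥ 0}`. -/
theorem stmt3 (a : ℝ) (ha : 0 < a) (φ : ℝ × ℝ → ℝ)
    (hφ : ∀ p : ℝ × ℝ, φ p = if 0 < p.1 then p.1 * Real.log (1 + a * p.2 / p.1) else 0) :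
    ConcaveOn ℝ {p : ℝ × ℝ | 0 ≤ p.1 ∧ 0 ≤ p.2} φ := by
  have hφ_eq : φ = perspective fun x ↦ log (1 + a * x) := by
    ext p
    simp only [hφ, perspective, mul_div_assoc]
  exact hφ_eq ▸ concaveOn_perspective (concaveOn_log_one_add_mul ha.le)
    (monotoneOn_log_one_add_mul ha.le)
end

section
/- Fix: positive integers K and L; a nonempty finite collection I of nonempty subsets of {1,...,K}; for each S ∈ I a positive integer n_S; reals 0 < D_1 < D_2 < ... < D_L; for each k ∈ {1,...,K} an integer r_k ∈ {1,...,L}; positive reals B, T, n₀; a nonempty finite set Ω with q : Ω → ℝ satisfying q(ω) ≥ 0 for all ω and Σ_{ω∈Ω} q(ω) = 1; and for each ω ∈ Ω and k ∈ {1,...,K} a positive real h_k(ω). Consider: (P1) minimize E(t,p) := Σ_{ω∈Ω} q(ω) Σ_{S∈I} Σ_{l=1}^L t_{ω,S,l}·p_{ω,S,l} over real families t = (t_{ω,S,l}), p = (p_{ω,S,l}) satisfying t_{ω,S,l} ≥ 0, Σ_{S∈I} Σ_{l=1}^L t_{ω,S,l} ≤ T for every ω, p_{ω,S,l} ≥ 0,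 and n_S·D_{r_k} ≤ (B/T) Σ_{ω∈Ω} q(ω)·t_{ω,S,r_k}·log₂(1 + p_{ω,S,r_k}·h_k(ω)/n₀) for all S ∈ I and k ∈ S; and (P2) minimize Ẽ(t,e) := Σ_{ω∈Ω} q(ω) Σ_{S∈I} Σ_{l=1}^L e_{ω,S,l} over real families t, e satisfying t_{ω,S,l} ≥ 0, Σ_{S∈I} Σ_{l=1}^L t_{ω,S,l} ≤ T for every ω, e_{ω,S,l} ≥ 0, and n_S·D_{r_k} ≤ (B/T) Σ_{ω∈Ω} q(ω)·φ(t_{ω,S,r_k}, e_{ω,S,r_k}·h_k(ω)/n₀) for all S ∈ I and k ∈ S, where φ(t,u) := t·log₂(1 + u/t) for t > 0 and φ(0,u) := 0. Then the infimum of E over the feasible set of (P1) equals the infimum of Ẽ over the feasible set of (P2). -/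
/-- The average-transmission-energy minimization problem (P1) (in time and
power variables) and its reformulation (P2) in time and energy variables (via
`e = t·p`, with the rate function extended by `0` at `t = 0`) have the same infimum. -/
theorem stmt4 (K L : ℕ) (hK : 0 < K) (hL : 0 < L)
    (I : Finset (Finset (Fin K))) (hI : I.Nonempty) (hIne : ∀ S ∈ I, S.Nonempty)
    (n : Finset (Fin K) → ℕ) (hn : ∀ S ∈ I, 0 < n S)
    (D : ℕ → ℝ) (hD1 : 0 < D 1)
    (hD : ∀ l m : ℕ, 1 ≤ l → l < m → m ≤ L → D l < D m)
    (r : Fin K → ℕ) (hr : ∀ k, r k ∈ Finset.Icc 1 L)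
    (B T n₀ : ℝ) (hB : 0 < B) (hT : 0 < T) (hn₀ : 0 < n₀)
    (Ω : Type) [Fintype Ω] [Nonempty Ω]
    (q : Ω → ℝ) (hq : ∀ ω, 0 ≤ q ω) (hq1 : ∑ ω, q ω = 1)
    (h : Ω → Fin K → ℝ) (hh : ∀ ω k, 0 < h ω k)
    (φ : ℝ → ℝ → ℝ)
    (hφ : ∀ t u : ℝ, φ t u = if 0 < t then t * Real.logb 2 (1 + u / t) else 0) :
    sInf {v : ℝ | ∃ t p : Ω → Finset (Fin K) → ℕ → ℝ,
        (∀ ω S l, 0 ≤ t ω S l) ∧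
        (∀ ω, ∑ S ∈ I, ∑ l ∈ Finset.Icc 1 L, t ω S l ≤ T) ∧
        (∀ ω S l, 0 ≤ p ω S l) ∧
        (∀ S ∈ I, ∀ k ∈ S, (n S : ℝ) * D (r k) ≤
          (B / T) * ∑ ω, q ω * (t ω S (r k) *
            Real.logb 2 (1 + p ω S (r k) * h ω k / n₀))) ∧
        v = ∑ ω, q ω * ∑ S ∈ I, ∑ l ∈ Finset.Icc 1 L, t ω S l * p ω S l} =
    sInf {v : ℝ | ∃ t e : Ω → Finset (Fin K) → ℕ → ℝ,
        (∀ ω S l, 0 ≤ t ω S l) ∧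
        (∀ ω, ∑ S ∈ I, ∑ l ∈ Finset.Icc 1 L, t ω S l ≤ T) ∧
        (∀ ω S l, 0 ≤ e ω S l) ∧
        (∀ S ∈ I, ∀ k ∈ S, (n S : ℝ) * D (r k) ≤
          (B / T) * ∑ ω, q ω * φ (t ω S (r k)) (e ω S (r k) * h ω k / n₀)) ∧
        v = ∑ ω, q ω * ∑ S ∈ I, ∑ l ∈ Finset.Icc 1 L, e ω S l} := by
  classical
  set SA := {v : ℝ | ∃ t p : Ω → Finset (Fin K) → ℕ → ℝ,
        (∀ ω S l, 0 ≤ t ω S l) ∧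
        (∀ ω, ∑ S ∈ I, ∑ l ∈ Finset.Icc 1 L, t ω S l ≤ T) ∧
        (∀ ω S l, 0 ≤ p ω S l) ∧
        (∀ S ∈ I, ∀ k ∈ S, (n S : ℝ) * D (r k) ≤
          (B / T) * ∑ ω, q ω * (t ω S (r k) *
            Real.logb 2 (1 + p ω S (r k) * h ω k / n₀))) ∧
        v = ∑ ω, q ω * ∑ S ∈ I, ∑ l ∈ Finset.Icc 1 L, t ω S l * p ω S l} with hSA
  set SB := {v : ℝ | ∃ t e : Ω → Finset (Fin K) → ℕ → ℝ,
        (∀ ω S l, 0 ≤ t ω S l) ∧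
        (∀ ω, ∑ S ∈ I, ∑ l ∈ Finset.Icc 1 L, t ω S l ≤ T) ∧
        (∀ ω S l, 0 ≤ e ω S l) ∧
        (∀ S ∈ I, ∀ k ∈ S, (n S : ℝ) * D (r k) ≤
          (B / T) * ∑ ω, q ω * φ (t ω S (r k)) (e ω S (r k) * h ω k / n₀)) ∧
        v = ∑ ω, q ω * ∑ S ∈ I, ∑ l ∈ Finset.Icc 1 L, e ω S l} with hSB
  -- (P1) feasible values are (P2) feasible values via e = t·p
  have hAB : SA ⊆ SB := by
    rintro v ⟨t, p, ht0, htT, hp0, hrate, hv⟩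
    refine ⟨t, fun ω S l => t ω S l * p ω S l, ht0, htT,
      fun ω S l => mul_nonneg (ht0 ω S l) (hp0 ω S l), ?_, hv⟩
    intro S hS k hk
    refine (hrate S hS k hk).trans (le_of_eq ?_)
    congr 1
    refine Finset.sum_congr rfl fun ω _ => ?_
    congr 1
    rw [hφ]
    rcases (ht0 ω S (r k)).lt_or_eq with h' | h'
    · rw [if_pos h']
      congr 2
      field_simp
    · rw [if_neg (by rw [← h']; exact lt_irrefl 0), ← h', zero_mul]
  -- every (P2) feasible value is dominated by a (P1) feasible value via p = e/t
  have hBA : ∀ v ∈ SB, ∃ v' ∈ SA, v' ≤ v := by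
    rintro v ⟨t, e, ht0, htT, he0, hrate, hv⟩
    set p : Ω → Finset (Fin K) → ℕ → ℝ :=
      fun ω S l => if 0 < t ω S l then e ω S l / t ω S l else 0 with hp
    have hp0 : ∀ ω S l, 0 ≤ p ω S l := by
      intro ω S l
      simp only [hp]
      split
      · exact div_nonneg (he0 ω S l) (ht0 ω S l)
      · exact le_rfl
    refine ⟨∑ ω, q ω * ∑ S ∈ I, ∑ l ∈ Finset.Icc 1 L, t ω S l * p ω S l,
      ⟨t, p, ht0, htT, hp0, ?_, rfl⟩, ?_⟩
    · intro S hS k hk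
      refine (hrate S hS k hk).trans (le_of_eq ?_)
      congr 1
      refine Finset.sum_congr rfl fun ω _ => ?_
      congr 1
      rw [hφ]
      rcases (ht0 ω S (r k)).lt_or_eq with h' | h'
      · rw [if_pos h']
        simp only [hp, if_pos h']
        congr 2
        field_simp
      · rw [if_neg (by rw [← h']; exact lt_irrefl 0), ← h', zero_mul]
    · rw [hv]
      refine Finset.sum_le_sum fun ω _ => mul_le_mul_of_nonneg_left ?_ (hq ω)
      refine Finset.sum_le_sum fun S _ => Finset.sum_le_sum fun l _ => ?_
      simp only [hp]
      split
      · rw [mul_div_cancel₀ _ (ne_of_gt (by assumption))]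
      · rw [mul_zero]; exact he0 ω S l
  -- both sets are bounded below by 0
  have hA0 : ∀ v ∈ SA, (0:ℝ) ≤ v := by
    rintro v ⟨t, p, ht0, _, hp0, _, rfl⟩
    refine Finset.sum_nonneg fun ω _ => mul_nonneg (hq ω) ?_
    exact Finset.sum_nonneg fun S _ => Finset.sum_nonneg fun l _ =>
      mul_nonneg (ht0 ω S l) (hp0 ω S l)
  have hB0 : ∀ v ∈ SB, (0:ℝ) ≤ v := by
    rintro v ⟨t, e, ht0, _, he0, _, rfl⟩
    refine Finset.sum_nonneg fun ω _ => mul_nonneg (hq ω) ?_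
    exact Finset.sum_nonneg fun S _ => Finset.sum_nonneg fun l _ => he0 ω S l
  rcases Set.eq_empty_or_nonempty SB with hB | hB
  · have hA : SA = ∅ := Set.eq_empty_of_subset_empty (hB ▸ hAB)
    rw [hA, hB]
  · obtain ⟨v, hv⟩ := hB
    obtain ⟨v', hv', _⟩ := hBA v hv
    refine le_antisymm ?_ (csInf_le_csInf ⟨0, hB0⟩ ⟨v', hv'⟩ hAB)
    refine le_csInf ⟨v, hv⟩ fun w hw => ?_
    obtain ⟨w', hw', hle⟩ := hBA w hw
    exact (csInf_le ⟨0, hA0⟩ hw').trans hle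
end

section
/- Fix: positive integers K and L; a nonempty finite collection I of nonempty subsets of {1,...,K}; for each S ∈ I a positive integer n_S; reals 0 < D_1 < D_2 < ... < D_L; for each k ∈ {1,...,K} an integer r_k ∈ {1,...,L}; a nonnegative integer Δ; positive reals B, T, n₀; positive reals P_1,...,P_K; a real β ≥ 1; a nonempty finite set Ω with q : Ω → ℝ satisfying q(ω) ≥ 0 for all ω and Σ_{ω∈Ω} q(ω) = 1; and for each ω ∈ Ω and k ∈ {1,...,K} a positive real h_k(ω). Consider Problem (w,r): minimize F(x,y,t,p) := Σ_{ω∈Ω} q(ω) Σ_{S∈I} Σ_{l=1}^L t_{ω,S,l}·p_{ω,S,l} + β Σ_{S∈I} Σ_{k∈S} n_S·P_k·T·(Σ_{l=1}^L l·y_{S,k,l} − x_{S,k}) over (x,y,t,p) where: x_{S,k} is an integer with x_{S,k} ∈ {1,...,L} and r_k ≤ x_{S,k} ≤ r_k + Δ for all S ∈ I, k ∈ S; y_{S,k,l} ∈ {0,1}, Σ_{l=1}^L y_{S,k,l} = 1, and Σ_{l=1}^L l·y_{S,k,l} ≥ x_{S,k} for all S ∈ I, k ∈ S; t_{ω,S,l}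 ≥ 0 with Σ_{S∈I} Σ_{l=1}^L t_{ω,S,l} ≤ T for every ω; p_{ω,S,l} ≥ 0; and n_S·D_l·y_{S,k,l} ≤ (B/T) Σ_{ω∈Ω} q(ω)·t_{ω,S,l}·log₂(1 + p_{ω,S,l}·h_k(ω)/n₀) for all S ∈ I, k ∈ S, l ∈ {1,...,L}. If (x*,y*,t*,p*) is feasible for Problem (w,r) and attains the infimum of F over the feasible set of Problem (w,r), then x*_{S,k} = min{ r_k + Δ, Σ_{l=1}^L l·y*_{S,k,l} } for every S ∈ I and k ∈ S. -/
/-!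
If `x*_{S,k}` were strictly below both `r_k + Δ` and the transmitted level `Σ_l l·y*_{S,k,l}`
(an integer at most `L`, since `y*_{S,k,·}` is a one-hot vector), raising it by one
level keeps every constraint satisfied and lowers the transcoding energy by
`β n_S P_k T > 0`, contradicting optimality.
-/

open Finset

section

variable {ι : Type*}

theorem exists_natCast_eq_sum_mul_of_zero_or_one (s : Finset ι) (w : ι → ℕ) {y : ι → ℝ}
    (hy : ∀ i ∈ s, y i = 0 ∨ y i = 1) : ∃ N : ℕ, (N : ℝ) = ∑ i ∈ s, (w i : ℝ) * y i := by
  refine ⟨∑ i ∈ s, if y i = 1 then w i else 0, ?_⟩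
  push_cast
  refine sum_congr rfl fun i hi => ?_
  rcases hy i hi with h | h <;> simp [h]

theorem sum_mul_le_of_sum_eq_one {s : Finset ι} {w y : ι → ℝ} {M : ℝ}
    (hw : ∀ i ∈ s, w i ≤ M) (hy : ∀ i ∈ s, 0 ≤ y i) (hy1 : ∑ i ∈ s, y i = 1) :
    ∑ i ∈ s, w i * y i ≤ M :=
  calc ∑ i ∈ s, w i * y i ≤ ∑ i ∈ s, M * y i :=
        sum_le_sum fun i hi => mul_le_mul_of_nonneg_right (hw i hi) (hy i hi)
    _ = M := by rw [← mul_sum, hy1, mul_one]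

end

section

variable {α β γ : Type*} [DecidableEq α] [DecidableEq β]

theorem forall_mem_forall_mem_ite {I : Finset α} {s : α → Finset β} {Q : α → β → γ → Prop}
    {x : α → β → γ} {S : α} {k : β} {v : γ} (hv : Q S k v)
    (hx : ∀ i ∈ I, ∀ j ∈ s i, Q i j (x i j)) :
    ∀ i ∈ I, ∀ j ∈ s i, Q i j (if i = S ∧ j = k then v else x i j) := by
  intro i hi j hj
  split_ifs with h
  · obtain ⟨rfl, rfl⟩ := h
    exact hv
  · exact hx i hi j hj

theorem sum_sum_mul_sub_ite_lt {I : Finset α} {s : α → Finset β} {c a x : α → β → ℝ}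
    {S : α} {k : β} {v : ℝ} (hS : S ∈ I) (hk : k ∈ s S) (hc : 0 < c S k) (hv : x S k < v) :
    ∑ i ∈ I, ∑ j ∈ s i, c i j * (a i j - if i = S ∧ j = k then v else x i j) <
      ∑ i ∈ I, ∑ j ∈ s i, c i j * (a i j - x i j) := by
  have hlt : c S k * (a S k - v) < c S k * (a S k - x S k) := by gcongr
  have hle : ∀ i j, c i j * (a i j - if i = S ∧ j = k then v else x i j) ≤
      c i j * (a i j - x i j) := by
    intro i j
    split_ifs with h
    · obtain ⟨rfl, rfl⟩ := h
      exact hlt.le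
    · rfl
  refine sum_lt_sum (fun i _ => sum_le_sum fun j _ => hle i j) ⟨S, hS, ?_⟩
  exact sum_lt_sum (fun j _ => hle S j) ⟨k, hk, by simpa using hlt⟩

end
theorem stmt10_general (K L : ℕ)
    (I : Finset (Finset (Fin K)))
    (n : Finset (Fin K) → ℕ) (hn : ∀ S ∈ I, 0 < n S)
    (D : ℕ → ℝ)
    (r : Fin K → ℕ) (Δ : ℕ)
    (B T n₀ : ℝ) (hT : 0 < T)
    (P : Fin K → ℝ) (hP : ∀ k, 0 < P k) (β : ℝ) (hβ : 1 ≤ β)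
    (Ω : Type) [Fintype Ω]
    (q : Ω → ℝ)
    (h : Ω → Fin K → ℝ)
    -- objective of Problem (w,r)
    (F : (Finset (Fin K) → Fin K → ℕ) → (Finset (Fin K) → Fin K → ℕ → ℝ) →
         (Ω → Finset (Fin K) → ℕ → ℝ) → (Ω → Finset (Fin K) → ℕ → ℝ) → ℝ)
    (hF : ∀ x y t p, F x y t p =
      (∑ ω, q ω * ∑ S ∈ I, ∑ l ∈ Finset.Icc 1 L, t ω S l * p ω S l) +
      β * ∑ S ∈ I, ∑ k ∈ S, (n S : ℝ) * P k * T *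
        ((∑ l ∈ Finset.Icc 1 L, (l : ℝ) * y S k l) - (x S k : ℝ)))
    -- feasibility for Problem (w,r)
    (Feas : (Finset (Fin K) → Fin K → ℕ) → (Finset (Fin K) → Fin K → ℕ → ℝ) →
         (Ω → Finset (Fin K) → ℕ → ℝ) → (Ω → Finset (Fin K) → ℕ → ℝ) → Prop)
    (hFeas : ∀ x y t p, Feas x y t p ↔
      ((∀ S ∈ I, ∀ k ∈ S, x S k ∈ Finset.Icc 1 L ∧ r k ≤ x S k ∧ x S k ≤ r k + Δ) ∧
       (∀ S ∈ I, ∀ k ∈ S, ∀ l ∈ Finset.Icc 1 L, y S k l = 0 ∨ y S k l = 1) ∧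
       (∀ S ∈ I, ∀ k ∈ S, ∑ l ∈ Finset.Icc 1 L, y S k l = 1) ∧
       (∀ S ∈ I, ∀ k ∈ S, (x S k : ℝ) ≤ ∑ l ∈ Finset.Icc 1 L, (l : ℝ) * y S k l) ∧
       (∀ ω S l, 0 ≤ t ω S l) ∧
       (∀ ω, ∑ S ∈ I, ∑ l ∈ Finset.Icc 1 L, t ω S l ≤ T) ∧
       (∀ ω S l, 0 ≤ p ω S l) ∧
       (∀ S ∈ I, ∀ k ∈ S, ∀ l ∈ Finset.Icc 1 L, (n S : ℝ) * D l * y S k l ≤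
         (B / T) * ∑ ω, q ω * (t ω S l *
           Real.logb 2 (1 + p ω S l * h ω k / n₀)))))
    -- (x*, y*, t*, p*) is an optimal solution of Problem (w,r)
    (xs : Finset (Fin K) → Fin K → ℕ) (ys : Finset (Fin K) → Fin K → ℕ → ℝ)
    (ts ps : Ω → Finset (Fin K) → ℕ → ℝ)
    (hfeas : Feas xs ys ts ps)
    (hopt : ∀ x y t p, Feas x y t p → F xs ys ts ps ≤ F x y t p) :
    ∀ S ∈ I, ∀ k ∈ S, (xs S k : ℝ) =
      min ((r k + Δ : ℕ) : ℝ) (∑ l ∈ Finset.Icc 1 L, (l : ℝ) * ys S k l) := by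
  intro S hS k hk
  obtain ⟨hx, hy01, hy1, hxy, ht, htT, hp, hrate⟩ := (hFeas xs ys ts ps).1 hfeas
  obtain ⟨N, hN⟩ := exists_natCast_eq_sum_mul_of_zero_or_one _ (fun l => l) (hy01 S hS k hk)
  have hNL : N ≤ L := by
    have := sum_mul_le_of_sum_eq_one (fun l hl => (Nat.cast_le.2 (mem_Icc.1 hl).2))
      (fun l hl => by rcases hy01 S hS k hk l hl with h0 | h0 <;> simp [h0]) (hy1 S hS k hk)
    exact_mod_cast hN ▸ this
  rw [← hN]
  refine (le_min (by exact_mod_cast (hx S hS k hk).2.2) (hN ▸ hxy S hS k hk)).antisymm ?_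
  by_contra! hlt
  rw [← Nat.cast_min, Nat.cast_lt, lt_min_iff] at hlt
  have hxr := (hx S hS k hk).2.1
  set x' : Finset (Fin K) → Fin K → ℕ :=
    fun S' k' => if S' = S ∧ k' = k then xs S k + 1 else xs S' k'
  have hfeas' : Feas x' ys ts ps := by
    refine (hFeas _ _ _ _).2 ⟨?_, hy01, hy1, ?_, ht, htT, hp, hrate⟩
    · exact forall_mem_forall_mem_ite (s := fun S' => S')
        (Q := fun _ k' z => z ∈ Icc 1 L ∧ r k' ≤ z ∧ z ≤ r k' + Δ)
        ⟨mem_Icc.2 ⟨by omega, by omega⟩, by omega, by omega⟩ hx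
    · refine forall_mem_forall_mem_ite (s := fun S' => S')
        (Q := fun S' k' (z : ℕ) => (z : ℝ) ≤ ∑ l ∈ Icc 1 L, (l : ℝ) * ys S' k' l) ?_ hxy
      rw [← hN]
      exact_mod_cast hlt.2
  have hdrop : F x' ys ts ps < F xs ys ts ps := by
    have hcost := sum_sum_mul_sub_ite_lt (s := fun S' => S') (x := fun S' k' => (xs S' k' : ℝ))
      (c := fun S' k' => (n S' : ℝ) * P k' * T)
      (a := fun S' k' => ∑ l ∈ Icc 1 L, (l : ℝ) * ys S' k' l) (v := ((xs S k + 1 : ℕ) : ℝ)) hS hk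
      (by have := hn S hS; have := hP k; positivity) (Nat.cast_lt.2 (Nat.lt_succ_self _))
    simp only [← Nat.cast_ite] at hcost
    rw [hF, hF]
    exact add_lt_add_right (mul_lt_mul_of_pos_left hcost (zero_lt_one.trans_le hβ)) _
  exact (hopt _ _ _ _ hfeas').not_gt hdrop

/-- Theorem 2, optimality property of Problem (w,r): at any optimal
solution of the weighted-sum energy minimization with user transcoding under the
relative smoothness requirement, the playback quality levels satisfy
`x*_{S,k} = min{r_k + Δ, Σ_l l·y*_{S,k,l}}`. -/
theorem stmt10 (K L : ℕ) (hK : 0 < K) (hL : 0 < L)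
    (I : Finset (Finset (Fin K))) (hI : I.Nonempty) (hIne : ∀ S ∈ I, S.Nonempty)
    (n : Finset (Fin K) → ℕ) (hn : ∀ S ∈ I, 0 < n S)
    (D : ℕ → ℝ) (hD1 : 0 < D 1)
    (hD : ∀ l m : ℕ, 1 ≤ l → l < m → m ≤ L → D l < D m)
    (r : Fin K → ℕ) (hr : ∀ k, r k ∈ Finset.Icc 1 L) (Δ : ℕ)
    (B T n₀ : ℝ) (hB : 0 < B) (hT : 0 < T) (hn₀ : 0 < n₀)
    (P : Fin K → ℝ) (hP : ∀ k, 0 < P k) (β : ℝ) (hβ : 1 ≤ β)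
    (Ω : Type) [Fintype Ω] [Nonempty Ω]
    (q : Ω → ℝ) (hq : ∀ ω, 0 ≤ q ω) (hq1 : ∑ ω, q ω = 1)
    (h : Ω → Fin K → ℝ) (hh : ∀ ω k, 0 < h ω k)
    -- objective of Problem (w,r)
    (F : (Finset (Fin K) → Fin K → ℕ) → (Finset (Fin K) → Fin K → ℕ → ℝ) →
         (Ω → Finset (Fin K) → ℕ → ℝ) → (Ω → Finset (Fin K) → ℕ → ℝ) → ℝ)
    (hF : ∀ x y t p, F x y t p =
      (∑ ω, q ω * ∑ S ∈ I, ∑ l ∈ Finset.Icc 1 L, t ω S l * p ω S l) +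
      β * ∑ S ∈ I, ∑ k ∈ S, (n S : ℝ) * P k * T *
        ((∑ l ∈ Finset.Icc 1 L, (l : ℝ) * y S k l) - (x S k : ℝ)))
    -- feasibility for Problem (w,r)
    (Feas : (Finset (Fin K) → Fin K → ℕ) → (Finset (Fin K) → Fin K → ℕ → ℝ) →
         (Ω → Finset (Fin K) → ℕ → ℝ) → (Ω → Finset (Fin K) → ℕ → ℝ) → Prop)
    (hFeas : ∀ x y t p, Feas x y t p ↔
      ((∀ S ∈ I, ∀ k ∈ S, x S k ∈ Finset.Icc 1 L ∧ r k ≤ x S k ∧ x S k ≤ r k + Δ) ∧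
       (∀ S ∈ I, ∀ k ∈ S, ∀ l ∈ Finset.Icc 1 L, y S k l = 0 ∨ y S k l = 1) ∧
       (∀ S ∈ I, ∀ k ∈ S, ∑ l ∈ Finset.Icc 1 L, y S k l = 1) ∧
       (∀ S ∈ I, ∀ k ∈ S, (x S k : ℝ) ≤ ∑ l ∈ Finset.Icc 1 L, (l : ℝ) * y S k l) ∧
       (∀ ω S l, 0 ≤ t ω S l) ∧
       (∀ ω, ∑ S ∈ I, ∑ l ∈ Finset.Icc 1 L, t ω S l ≤ T) ∧
       (∀ ω S l, 0 ≤ p ω S l) ∧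
       (∀ S ∈ I, ∀ k ∈ S, ∀ l ∈ Finset.Icc 1 L, (n S : ℝ) * D l * y S k l ≤
         (B / T) * ∑ ω, q ω * (t ω S l *
           Real.logb 2 (1 + p ω S l * h ω k / n₀)))))
    -- (x*, y*, t*, p*) is an optimal solution of Problem (w,r)
    (xs : Finset (Fin K) → Fin K → ℕ) (ys : Finset (Fin K) → Fin K → ℕ → ℝ)
    (ts ps : Ω → Finset (Fin K) → ℕ → ℝ)
    (hfeas : Feas xs ys ts ps)
    (hopt : ∀ x y t p, Feas x y t p → F xs ys ts ps ≤ F x y t p) :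
    ∀ S ∈ I, ∀ k ∈ S, (xs S k : ℝ) =
      min ((r k + Δ : ℕ) : ℝ) (∑ l ∈ Finset.Icc 1 L, (l : ℝ) * ys S k l) :=
  stmt10_general K L I n hn D r Δ B T n₀ hT P hP β hβ Ω q h F hF Feas hFeas xs ys ts ps hfeas hopt
end

section
/- Fix: positive integers K and L; a nonempty finite collection I of nonempty subsets of {1,...,K}; for each S ∈ I a positive integer n_S; reals 0 < D_1 < D_2 < ... < D_L; for each k ∈ {1,...,K} an integer r_k ∈ {1,...,L}; a nonnegative integer Δ; positive reals B, T, n₀; positive reals P_1,...,P_K; a real β ≥ 1; a nonempty finite set Ω with q : Ω → ℝ satisfying q(ω) ≥ 0 for all ω and Σ_{ω∈Ω} q(ω) = 1; and for each ω ∈ Ω and k ∈ {1,...,K} a positive real h_k(ω). Let Problem (w,r) be: minimize Σ_{ω∈Ω} q(ω) Σ_{S∈I} Σ_{l=1}^L t_{ω,S,l}·p_{ω,S,l} + β Σ_{S∈I} Σ_{k∈S} n_S·P_k·T·(Σ_{l=1}^L l·y_{S,k,l} − x_{S,k}) over (x,y,t,p) with: integer x_{S,k} ∈ {1,...,L}, r_k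 ≤ x_{S,k} ≤ r_k + Δ; y_{S,k,l} ∈ {0,1}, Σ_{l=1}^L y_{S,k,l} = 1, Σ_{l=1}^L l·y_{S,k,l} ≥ x_{S,k}; t_{ω,S,l} ≥ 0, Σ_{S∈I} Σ_{l=1}^L t_{ω,S,l} ≤ T for every ω; p_{ω,S,l} ≥ 0; and n_S·D_l·y_{S,k,l} ≤ (B/T) Σ_{ω∈Ω} q(ω)·t_{ω,S,l}·log₂(1 + p_{ω,S,l}·h_k(ω)/n₀) for all S ∈ I, k ∈ S, l ∈ {1,...,L}. Let Problem (w,r') be: minimize Σ_{ω∈Ω} q(ω) Σ_{S∈I} Σ_{l=1}^L t_{ω,S,l}·p_{ω,S,l} + β Σ_{S∈I} Σ_{k∈S} n_S·P_k·T·max{ Σ_{l=1}^L l·y_{S,k,l} − (r_k + Δ), 0 } over (y,t,p) with: y_{S,k,l} ∈ {0,1}, Σ_{l=1}^L y_{S,k,l} = 1, Σ_{l=1}^L l·y_{S,k,l} ≥ r_k; and the same constraints on (t,p) as above. Then the infimum of the objective over the feasible set of Problem (w,r) equals the infimum of the objective over the feasible set of Problem (w,r'). -/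
lemma stmt11_exists_lvl (L : ℕ) (y : ℕ → ℝ)
    (h01 : ∀ l ∈ Finset.Icc 1 L, y l = 0 ∨ y l = 1)
    (hsum : ∑ l ∈ Finset.Icc 1 L, y l = 1) :
    ∃ l₀ ∈ Finset.Icc 1 L, ∑ l ∈ Finset.Icc 1 L, (l : ℝ) * y l = (l₀ : ℝ) := by
  have hex : ∃ l₀ ∈ Finset.Icc 1 L, y l₀ = 1 := by
    by_contra hc
    push_neg at hc
    have h0 : ∀ l ∈ Finset.Icc 1 L, y l = 0 := fun l hl => (h01 l hl).resolve_right (hc l hl)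
    rw [Finset.sum_eq_zero h0] at hsum
    norm_num at hsum
  obtain ⟨l₀, hl₀, hy₀⟩ := hex
  have hzero : ∀ l ∈ Finset.Icc 1 L, l ≠ l₀ → y l = 0 := by
    intro l hl hne
    by_contra hne0
    have hy1 : y l = 1 := (h01 l hl).resolve_left hne0
    have hnn : ∀ m ∈ Finset.Icc 1 L, 0 ≤ y m := by
      intro m hm; rcases h01 m hm with hm0 | hm0 <;> rw [hm0] <;> norm_num
    have hsub : ({l, l₀} : Finset ℕ) ⊆ Finset.Icc 1 L := by
      intro m hm; simp at hm; rcases hm with rfl | rfl <;> assumption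
    have h2 : ∑ m ∈ ({l, l₀} : Finset ℕ), y m ≤ ∑ m ∈ Finset.Icc 1 L, y m :=
      Finset.sum_le_sum_of_subset_of_nonneg hsub (fun m hm _ => hnn m hm)
    rw [Finset.sum_pair hne, hy1, hy₀, hsum] at h2
    norm_num at h2
  refine ⟨l₀, hl₀, ?_⟩
  rw [Finset.sum_eq_single_of_mem l₀ hl₀ (fun b hb hbne => by rw [hzero b hb hbne, mul_zero]),
    hy₀, mul_one]

lemma stmt11_sInf_eq (A B : Set ℝ) (h0 : ∀ v ∈ A, 0 ≤ v) (hBA : B ⊆ A)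
    (hAB : ∀ v ∈ A, ∃ w ∈ B, w ≤ v) : sInf A = sInf B := by
  by_cases hA : A.Nonempty
  · obtain ⟨a, ha⟩ := hA
    obtain ⟨b, hb, _⟩ := hAB a ha
    have hBddA : BddBelow A := ⟨0, h0⟩
    have hBddB : BddBelow B := hBddA.mono hBA
    apply le_antisymm
    · exact csInf_le_csInf hBddA ⟨b, hb⟩ hBA
    · refine le_csInf ⟨a, ha⟩ (fun v hv => ?_)
      obtain ⟨w, hw, hwv⟩ := hAB v hv
      exact (csInf_le hBddB hw).trans hwv
  · rw [Set.not_nonempty_iff_eq_empty] at hA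
    have hB : B = ∅ := Set.eq_empty_of_subset_empty (hA ▸ hBA)
    rw [hA, hB]


/-- equivalence of Problem (w,r) and Problem (w,r'): the weighted-sum
energy minimization with user transcoding under the relative smoothness requirement has
the same infimum as its reformulation obtained by eliminating the playback quality
variables `x` (replacing the transcoding term by `max{Σ_l l·y − (r_k + Δ), 0}`). -/
theorem stmt11 (K L : ℕ) (hK : 0 < K) (hL : 0 < L)
    (I : Finset (Finset (Fin K))) (hI : I.Nonempty) (hIne : ∀ S ∈ I, S.Nonempty)
    (n : Finset (Fin K) → ℕ) (hn : ∀ S ∈ I, 0 < n S)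
    (D : ℕ → ℝ) (hD1 : 0 < D 1)
    (hD : ∀ l m : ℕ, 1 ≤ l → l < m → m ≤ L → D l < D m)
    (r : Fin K → ℕ) (hr : ∀ k, r k ∈ Finset.Icc 1 L) (Δ : ℕ)
    (B T n₀ : ℝ) (hB : 0 < B) (hT : 0 < T) (hn₀ : 0 < n₀)
    (P : Fin K → ℝ) (hP : ∀ k, 0 < P k) (β : ℝ) (hβ : 1 ≤ β)
    (Ω : Type) [Fintype Ω] [Nonempty Ω]
    (q : Ω → ℝ) (hq : ∀ ω, 0 ≤ q ω) (hq1 : ∑ ω, q ω = 1)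
    (h : Ω → Fin K → ℝ) (hh : ∀ ω k, 0 < h ω k) :
    sInf {v : ℝ | ∃ (x : Finset (Fin K) → Fin K → ℕ)
        (y : Finset (Fin K) → Fin K → ℕ → ℝ)
        (t p : Ω → Finset (Fin K) → ℕ → ℝ),
      (∀ S ∈ I, ∀ k ∈ S, x S k ∈ Finset.Icc 1 L ∧ r k ≤ x S k ∧ x S k ≤ r k + Δ) ∧
      (∀ S ∈ I, ∀ k ∈ S, ∀ l ∈ Finset.Icc 1 L, y S k l = 0 ∨ y S k l = 1) ∧
      (∀ S ∈ I, ∀ k ∈ S, ∑ l ∈ Finset.Icc 1 L, y S k l = 1) ∧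
      (∀ S ∈ I, ∀ k ∈ S, (x S k : ℝ) ≤ ∑ l ∈ Finset.Icc 1 L, (l : ℝ) * y S k l) ∧
      (∀ ω S l, 0 ≤ t ω S l) ∧
      (∀ ω, ∑ S ∈ I, ∑ l ∈ Finset.Icc 1 L, t ω S l ≤ T) ∧
      (∀ ω S l, 0 ≤ p ω S l) ∧
      (∀ S ∈ I, ∀ k ∈ S, ∀ l ∈ Finset.Icc 1 L, (n S : ℝ) * D l * y S k l ≤
        (B / T) * ∑ ω, q ω * (t ω S l * Real.logb 2 (1 + p ω S l * h ω k / n₀))) ∧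
      v = (∑ ω, q ω * ∑ S ∈ I, ∑ l ∈ Finset.Icc 1 L, t ω S l * p ω S l) +
        β * ∑ S ∈ I, ∑ k ∈ S, (n S : ℝ) * P k * T *
          ((∑ l ∈ Finset.Icc 1 L, (l : ℝ) * y S k l) - (x S k : ℝ))} =
    sInf {v : ℝ | ∃ (y : Finset (Fin K) → Fin K → ℕ → ℝ)
        (t p : Ω → Finset (Fin K) → ℕ → ℝ),
      (∀ S ∈ I, ∀ k ∈ S, ∀ l ∈ Finset.Icc 1 L, y S k l = 0 ∨ y S k l = 1) ∧
      (∀ S ∈ I, ∀ k ∈ S, ∑ l ∈ Finset.Icc 1 L, y S k l = 1) ∧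
      (∀ S ∈ I, ∀ k ∈ S, (r k : ℝ) ≤ ∑ l ∈ Finset.Icc 1 L, (l : ℝ) * y S k l) ∧
      (∀ ω S l, 0 ≤ t ω S l) ∧
      (∀ ω, ∑ S ∈ I, ∑ l ∈ Finset.Icc 1 L, t ω S l ≤ T) ∧
      (∀ ω S l, 0 ≤ p ω S l) ∧
      (∀ S ∈ I, ∀ k ∈ S, ∀ l ∈ Finset.Icc 1 L, (n S : ℝ) * D l * y S k l ≤
        (B / T) * ∑ ω, q ω * (t ω S l * Real.logb 2 (1 + p ω S l * h ω k / n₀))) ∧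
      v = (∑ ω, q ω * ∑ S ∈ I, ∑ l ∈ Finset.Icc 1 L, t ω S l * p ω S l) +
        β * ∑ S ∈ I, ∑ k ∈ S, (n S : ℝ) * P k * T *
          max ((∑ l ∈ Finset.Icc 1 L, (l : ℝ) * y S k l) - ((r k + Δ : ℕ) : ℝ)) 0} := by
  classical
  apply stmt11_sInf_eq
  · -- every value of Problem (w,r) is nonnegative
    rintro v ⟨x, y, t, p, hx, h01, hsum, hxle, ht0, htT, hp0, hrate, rfl⟩
    have hbase : 0 ≤ ∑ ω, q ω * ∑ S ∈ I, ∑ l ∈ Finset.Icc 1 L, t ω S l * p ω S l := by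
      apply Finset.sum_nonneg; intro ω _
      refine mul_nonneg (hq ω) ?_
      apply Finset.sum_nonneg; intro S _
      apply Finset.sum_nonneg; intro l _
      exact mul_nonneg (ht0 ω S l) (hp0 ω S l)
    have htr : 0 ≤ β * ∑ S ∈ I, ∑ k ∈ S, (n S : ℝ) * P k * T *
        ((∑ l ∈ Finset.Icc 1 L, (l : ℝ) * y S k l) - (x S k : ℝ)) := by
      refine mul_nonneg (by linarith) ?_
      apply Finset.sum_nonneg; intro S hS
      apply Finset.sum_nonneg; intro k hk
      refine mul_nonneg (mul_nonneg (mul_nonneg (Nat.cast_nonneg _) (hP k).le) hT.le) ?_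
      linarith [hxle S hS k hk]
    linarith
  · -- the feasible values of Problem (w,r') are feasible values of Problem (w,r)
    rintro v ⟨y, t, p, h01, hsum, hge, ht0, htT, hp0, hrate, rfl⟩
    refine ⟨fun S k => min (r k + Δ) (Nat.floor (∑ l ∈ Finset.Icc 1 L, (l : ℝ) * y S k l)),
      y, t, p, ?_, h01, hsum, ?_, ht0, htT, hp0, hrate, ?_⟩
    · intro S hS k hk
      obtain ⟨l₀, hl₀, hval⟩ := stmt11_exists_lvl L (y S k) (h01 S hS k hk) (hsum S hS k hk)
      simp only [hval, Nat.floor_natCast]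
      have hl₀' : 1 ≤ l₀ ∧ l₀ ≤ L := Finset.mem_Icc.mp hl₀
      have hrk : 1 ≤ r k ∧ r k ≤ L := Finset.mem_Icc.mp (hr k)
      have hrl : r k ≤ l₀ := by
        have := hge S hS k hk
        rw [hval] at this
        exact_mod_cast this
      simp only [Finset.mem_Icc]
      omega
    · intro S hS k hk
      obtain ⟨l₀, hl₀, hval⟩ := stmt11_exists_lvl L (y S k) (h01 S hS k hk) (hsum S hS k hk)
      simp only [hval, Nat.floor_natCast]
      exact_mod_cast min_le_right (r k + Δ) l₀
    · congr 1
      congr 1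
      apply Finset.sum_congr rfl; intro S hS
      apply Finset.sum_congr rfl; intro k hk
      obtain ⟨l₀, hl₀, hval⟩ := stmt11_exists_lvl L (y S k) (h01 S hS k hk) (hsum S hS k hk)
      simp only [hval, Nat.floor_natCast]
      congr 1
      push_cast
      rcases le_total ((r k : ℝ) + (Δ : ℝ)) (l₀ : ℝ) with hc | hc
      · rw [min_eq_left (by exact_mod_cast hc), max_eq_left (by linarith)]
      · rw [min_eq_right (by exact_mod_cast hc), max_eq_right (by linarith), sub_self]
  · -- each value of Problem (w,r) dominates a value of Problem (w,r')
    rintro v ⟨x, y, t, p, hx, h01, hsum, hxle, ht0, htT, hp0, hrate, rfl⟩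
    refine ⟨_, ⟨y, t, p, h01, hsum, ?_, ht0, htT, hp0, hrate, rfl⟩, ?_⟩
    · intro S hS k hk
      refine le_trans ?_ (hxle S hS k hk)
      exact_mod_cast (hx S hS k hk).2.1
    · have hterm : ∀ S ∈ I, ∀ k ∈ S, (n S : ℝ) * P k * T *
          max ((∑ l ∈ Finset.Icc 1 L, (l : ℝ) * y S k l) - ((r k + Δ : ℕ) : ℝ)) 0 ≤
          (n S : ℝ) * P k * T *
          ((∑ l ∈ Finset.Icc 1 L, (l : ℝ) * y S k l) - (x S k : ℝ)) := by
        intro S hS k hk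
        refine mul_le_mul_of_nonneg_left ?_
          (mul_nonneg (mul_nonneg (Nat.cast_nonneg _) (hP k).le) hT.le)
        have hxu : (x S k : ℝ) ≤ ((r k + Δ : ℕ) : ℝ) := by
          exact_mod_cast (hx S hS k hk).2.2
        have h2 := hxle S hS k hk
        apply max_le <;> linarith
      have hsum' : ∑ S ∈ I, ∑ k ∈ S, (n S : ℝ) * P k * T *
          max ((∑ l ∈ Finset.Icc 1 L, (l : ℝ) * y S k l) - ((r k + Δ : ℕ) : ℝ)) 0 ≤
          ∑ S ∈ I, ∑ k ∈ S, (n S : ℝ) * P k * T *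
          ((∑ l ∈ Finset.Icc 1 L, (l : ℝ) * y S k l) - (x S k : ℝ)) := by
        refine Finset.sum_le_sum ?_
        intro S hS
        exact Finset.sum_le_sum (fun k hk => hterm S hS k hk)
      have hβ0 : (0:ℝ) ≤ β := by linarith
      have := mul_le_mul_of_nonneg_left hsum' hβ0
      linarith
end

section
/- Fix: positive integers K and L; a nonempty finite collection I of nonempty subsets of {1,...,K}; for each S ∈ I a positive integer n_S; reals 0 < D_1 < D_2 < ... < D_L; for each k ∈ {1,...,K} an integer r_k ∈ {1,...,L}; a nonnegative integer Δ; positive reals B, T, n₀; a nonempty finite set Ω with q : Ω → ℝ satisfying q(ω) ≥ 0 for all ω and Σ_{ω∈Ω} q(ω) = 1; and for each ω ∈ Ω and k ∈ {1,...,K} a positive real h_k(ω). Define E(t,p) := Σ_{ω∈Ω} q(ω) Σ_{S∈I} Σ_{l=1}^L t_{ω,S,l}·p_{ω,S,l} and R_{S,l,k}(t,p) := (B/T) Σ_{ω∈Ω} q(ω)·t_{ω,S,l}·log₂(1 + p_{ω,S,l}·h_k(ω)/n₀). Let Problem (w/o,a) be: minimize E(t,p) over (t,p) with t_{ω,S,l}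 ≥ 0, Σ_{S∈I} Σ_{l=1}^L t_{ω,S,l} ≤ T for every ω, p_{ω,S,l} ≥ 0, and n_S·D_{r_k} ≤ R_{S,r_k,k}(t,p) for all S ∈ I, k ∈ S; write E^{(w/o,a)} for its infimum. Let Problem (w/o,r) be: minimize E(t,p) over (y,t,p) with y_{S,k,l} ∈ {0,1}, Σ_{l=1}^L y_{S,k,l} = 1, r_k ≤ Σ_{l=1}^L l·y_{S,k,l} ≤ r_k + Δ for all S ∈ I, k ∈ S, the same constraints on (t,p), and n_S·D_l·y_{S,k,l} ≤ R_{S,l,k}(t,p) for all S ∈ I, k ∈ S, l ∈ {1,...,L}; write E^{(w/o,r)} for its infimum. If the feasible set of Problem (w/o,a) is nonempty, then the feasible set of Problem (w/o,r) is nonempty and E^{(w/o,r)} ≤ E^{(w/o,a)}. -/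
/-- part of Theorem 3: if Problem (w/o,a) (without user transcoding,
absolute smoothness) is feasible, then Problem (w/o,r) (without user transcoding,
relative smoothness) is feasible and `E^{(w/o,r)} ≤ E^{(w/o,a)}`. -/
theorem stmt12 (K L : ℕ) (hK : 0 < K) (hL : 0 < L)
    (I : Finset (Finset (Fin K))) (hI : I.Nonempty) (hIne : ∀ S ∈ I, S.Nonempty)
    (n : Finset (Fin K) → ℕ) (hn : ∀ S ∈ I, 0 < n S)
    (D : ℕ → ℝ) (hD1 : 0 < D 1)
    (hD : ∀ l m : ℕ, 1 ≤ l → l < m → m ≤ L → D l < D m)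
    (r : Fin K → ℕ) (hr : ∀ k, r k ∈ Finset.Icc 1 L) (Δ : ℕ)
    (B T n₀ : ℝ) (hB : 0 < B) (hT : 0 < T) (hn₀ : 0 < n₀)
    (Ω : Type) [Fintype Ω] [Nonempty Ω]
    (q : Ω → ℝ) (hq : ∀ ω, 0 ≤ q ω) (hq1 : ∑ ω, q ω = 1)
    (h : Ω → Fin K → ℝ) (hh : ∀ ω k, 0 < h ω k)
    -- average transmission energy
    (E : (Ω → Finset (Fin K) → ℕ → ℝ) → (Ω → Finset (Fin K) → ℕ → ℝ) → ℝ)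
    (hE : ∀ t p, E t p = ∑ ω, q ω * ∑ S ∈ I, ∑ l ∈ Finset.Icc 1 L, t ω S l * p ω S l)
    -- average transmission rate
    (R : Finset (Fin K) → ℕ → Fin K →
        (Ω → Finset (Fin K) → ℕ → ℝ) → (Ω → Finset (Fin K) → ℕ → ℝ) → ℝ)
    (hR : ∀ S l k t p, R S l k t p =
      (B / T) * ∑ ω, q ω * (t ω S l * Real.logb 2 (1 + p ω S l * h ω k / n₀)))
    -- feasibility for Problem (w/o,a)
    (FeasA : (Ω → Finset (Fin K) → ℕ → ℝ) → (Ω → Finset (Fin K) → ℕ → ℝ) → Prop)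
    (hFeasA : ∀ t p, FeasA t p ↔
      ((∀ ω S l, 0 ≤ t ω S l) ∧
       (∀ ω, ∑ S ∈ I, ∑ l ∈ Finset.Icc 1 L, t ω S l ≤ T) ∧
       (∀ ω S l, 0 ≤ p ω S l) ∧
       (∀ S ∈ I, ∀ k ∈ S, (n S : ℝ) * D (r k) ≤ R S (r k) k t p)))
    -- feasibility for Problem (w/o,r)
    (FeasR : (Finset (Fin K) → Fin K → ℕ → ℝ) →
        (Ω → Finset (Fin K) → ℕ → ℝ) → (Ω → Finset (Fin K) → ℕ → ℝ) → Prop)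
    (hFeasR : ∀ y t p, FeasR y t p ↔
      ((∀ S ∈ I, ∀ k ∈ S, ∀ l ∈ Finset.Icc 1 L, y S k l = 0 ∨ y S k l = 1) ∧
       (∀ S ∈ I, ∀ k ∈ S, ∑ l ∈ Finset.Icc 1 L, y S k l = 1) ∧
       (∀ S ∈ I, ∀ k ∈ S, (r k : ℝ) ≤ ∑ l ∈ Finset.Icc 1 L, (l : ℝ) * y S k l ∧
         (∑ l ∈ Finset.Icc 1 L, (l : ℝ) * y S k l) ≤ ((r k + Δ : ℕ) : ℝ)) ∧
       (∀ ω S l, 0 ≤ t ω S l) ∧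
       (∀ ω, ∑ S ∈ I, ∑ l ∈ Finset.Icc 1 L, t ω S l ≤ T) ∧
       (∀ ω S l, 0 ≤ p ω S l) ∧
       (∀ S ∈ I, ∀ k ∈ S, ∀ l ∈ Finset.Icc 1 L,
         (n S : ℝ) * D l * y S k l ≤ R S l k t p)))
    -- Problem (w/o,a) is feasible
    (hfeas : ∃ t p, FeasA t p) :
    (∃ y t p, FeasR y t p) ∧
    sInf {v : ℝ | ∃ y t p, FeasR y t p ∧ v = E t p} ≤
      sInf {v : ℝ | ∃ t p, FeasA t p ∧ v = E t p} := by

  -- key: any FeasA point yields a FeasR point with the same energy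
  have key : ∀ t p, FeasA t p → ∃ y, FeasR y t p := by
    intro t p hA
    rw [hFeasA] at hA
    obtain ⟨ht0, htT, hp0, hrate⟩ := hA
    refine ⟨fun S k l => if l = r k then 1 else 0, ?_⟩
    have hRnn : ∀ S l k, 0 ≤ R S l k t p := by
      intro S l k
      rw [hR]
      apply mul_nonneg (div_nonneg hB.le hT.le)
      apply Finset.sum_nonneg
      intro ω _
      apply mul_nonneg (hq ω)
      apply mul_nonneg (ht0 ω S l)
      apply Real.logb_nonneg one_lt_two
      have : 0 ≤ p ω S l * h ω k / n₀ :=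
        div_nonneg (mul_nonneg (hp0 ω S l) (hh ω k).le) hn₀.le
      linarith
    rw [hFeasR]
    have hrk : ∀ k : Fin K, r k ∈ Finset.Icc 1 L := hr
    refine ⟨?_, ?_, ?_, ht0, htT, hp0, ?_⟩
    · intro S _ k _ l _
      by_cases hl : l = r k <;> simp [hl]
    · intro S _ k _
      rw [Finset.sum_ite_eq' (Finset.Icc 1 L) (r k) (fun _ => (1:ℝ))]
      simp [hrk k]
    · intro S _ k _
      constructor
      · have : ∑ l ∈ Finset.Icc 1 L, (l : ℝ) * (if l = r k then (1:ℝ) else 0)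
            = (r k : ℝ) := by
          simp only [mul_ite, mul_one, mul_zero]
          rw [Finset.sum_ite_eq' (Finset.Icc 1 L) (r k) (fun l => (l:ℝ))]
          simp [hrk k]
        rw [this]
      · have : ∑ l ∈ Finset.Icc 1 L, (l : ℝ) * (if l = r k then (1:ℝ) else 0)
            = (r k : ℝ) := by
          simp only [mul_ite, mul_one, mul_zero]
          rw [Finset.sum_ite_eq' (Finset.Icc 1 L) (r k) (fun l => (l:ℝ))]
          simp [hrk k]
        rw [this]
        push_cast
        linarith [Nat.cast_nonneg (α := ℝ) Δ]
    · intro S hS k hk l hl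
      by_cases hlr : l = r k
      · subst hlr
        simpa using hrate S hS k hk
      · simp only [hlr, if_false, mul_zero]
        exact hRnn S l k
  constructor
  · obtain ⟨t, p, hA⟩ := hfeas
    obtain ⟨y, hy⟩ := key t p hA
    exact ⟨y, t, p, hy⟩
  · apply csInf_le_csInf
    · refine ⟨0, ?_⟩
      rintro v ⟨y, t, p, hF, rfl⟩
      rw [hFeasR] at hF
      obtain ⟨-, -, -, ht0, -, hp0, -⟩ := hF
      rw [hE]
      apply Finset.sum_nonneg
      intro ω _
      apply mul_nonneg (hq ω)
      apply Finset.sum_nonneg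
      intro S _
      apply Finset.sum_nonneg
      intro l _
      exact mul_nonneg (ht0 ω S l) (hp0 ω S l)
    · obtain ⟨t, p, hA⟩ := hfeas
      exact ⟨E t p, t, p, hA, rfl⟩
    · rintro v ⟨t, p, hA, rfl⟩
      obtain ⟨y, hy⟩ := key t p hA
      exact ⟨y, t, p, hy, rfl⟩
end

section
/- Fix: positive integers K and L; a nonempty finite collection I of nonempty subsets of {1,...,K}; for each S ∈ I a positive integer n_S; reals 0 < D_1 < D_2 < ... < D_L; for each k ∈ {1,...,K} an integer r_k ∈ {1,...,L}; positive reals B, T, n₀; positive reals P_1,...,P_K; a real β ≥ 1; a nonempty finite set Ω with q : Ω → ℝ satisfying q(ω) ≥ 0 for all ω and Σ_{ω∈Ω} q(ω) = 1; and for each ω ∈ Ω and k ∈ {1,...,K} a positive real h_k(ω). Define E(t,p) := Σ_{ω∈Ω} q(ω) Σ_{S∈I} Σ_{l=1}^L t_{ω,S,l}·p_{ω,S,l} and R_{S,l,k}(t,p) := (B/T) Σ_{ω∈Ω} q(ω)·t_{ω,S,l}·log₂(1 + p_{ω,S,l}·h_k(ω)/n₀). Let Problem (w/o,a) be: minimize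 E(t,p) over (t,p) with t_{ω,S,l} ≥ 0, Σ_{S∈I} Σ_{l=1}^L t_{ω,S,l} ≤ T for every ω, p_{ω,S,l} ≥ 0, and n_S·D_{r_k} ≤ R_{S,r_k,k}(t,p) for all S ∈ I, k ∈ S; write E^{(w/o,a)} for its infimum. Let Problem (w,a) be: minimize E(t,p) + β Σ_{S∈I} Σ_{k∈S} n_S·P_k·T·(Σ_{l=1}^L l·y_{S,k,l} − r_k) over (y,t,p) with y_{S,k,l} ∈ {0,1}, Σ_{l=1}^L y_{S,k,l} = 1, Σ_{l=1}^L l·y_{S,k,l} ≥ r_k for all S ∈ I, k ∈ S, the same constraints on (t,p), and n_S·D_l·y_{S,k,l} ≤ R_{S,l,k}(t,p) for all S ∈ I, k ∈ S, l ∈ {1,...,L}; write E^{(w,a)} for its infimum. If the feasible set of Problem (w/o,a) is nonempty, then the feasible set of Problem (w,a) is nonempty and E^{(w,a)} ≤ E^{(w/o,a)}. -/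
/-- part of Theorem 3: if Problem (w/o,a) (without user transcoding,
absolute smoothness) is feasible, then Problem (w,a) (with user transcoding, absolute
smoothness) is feasible and `E^{(w,a)} ≤ E^{(w/o,a)}`. -/
theorem stmt14 (K L : ℕ) (hK : 0 < K) (hL : 0 < L)
    (I : Finset (Finset (Fin K))) (hI : I.Nonempty) (hIne : ∀ S ∈ I, S.Nonempty)
    (n : Finset (Fin K) → ℕ) (hn : ∀ S ∈ I, 0 < n S)
    (D : ℕ → ℝ) (hD1 : 0 < D 1)
    (hD : ∀ l m : ℕ, 1 ≤ l → l < m → m ≤ L → D l < D m)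
    (r : Fin K → ℕ) (hr : ∀ k, r k ∈ Finset.Icc 1 L)
    (B T n₀ : ℝ) (hB : 0 < B) (hT : 0 < T) (hn₀ : 0 < n₀)
    (P : Fin K → ℝ) (hP : ∀ k, 0 < P k) (β : ℝ) (hβ : 1 ≤ β)
    (Ω : Type) [Fintype Ω] [Nonempty Ω]
    (q : Ω → ℝ) (hq : ∀ ω, 0 ≤ q ω) (hq1 : ∑ ω, q ω = 1)
    (h : Ω → Fin K → ℝ) (hh : ∀ ω k, 0 < h ω k)
    -- average transmission energy
    (E : (Ω → Finset (Fin K) → ℕ → ℝ) → (Ω → Finset (Fin K) → ℕ → ℝ) → ℝ)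
    (hE : ∀ t p, E t p = ∑ ω, q ω * ∑ S ∈ I, ∑ l ∈ Finset.Icc 1 L, t ω S l * p ω S l)
    -- average transmission rate
    (R : Finset (Fin K) → ℕ → Fin K →
        (Ω → Finset (Fin K) → ℕ → ℝ) → (Ω → Finset (Fin K) → ℕ → ℝ) → ℝ)
    (hR : ∀ S l k t p, R S l k t p =
      (B / T) * ∑ ω, q ω * (t ω S l * Real.logb 2 (1 + p ω S l * h ω k / n₀)))
    -- feasibility for Problem (w/o,a)
    (FeasA : (Ω → Finset (Fin K) → ℕ → ℝ) → (Ω → Finset (Fin K) → ℕ → ℝ) → Prop)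
    (hFeasA : ∀ t p, FeasA t p ↔
      ((∀ ω S l, 0 ≤ t ω S l) ∧
       (∀ ω, ∑ S ∈ I, ∑ l ∈ Finset.Icc 1 L, t ω S l ≤ T) ∧
       (∀ ω S l, 0 ≤ p ω S l) ∧
       (∀ S ∈ I, ∀ k ∈ S, (n S : ℝ) * D (r k) ≤ R S (r k) k t p)))
    -- feasibility for Problem (w,a)
    (FeasW : (Finset (Fin K) → Fin K → ℕ → ℝ) →
        (Ω → Finset (Fin K) → ℕ → ℝ) → (Ω → Finset (Fin K) → ℕ → ℝ) → Prop)
    (hFeasW : ∀ y t p, FeasW y t p ↔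
      ((∀ S ∈ I, ∀ k ∈ S, ∀ l ∈ Finset.Icc 1 L, y S k l = 0 ∨ y S k l = 1) ∧
       (∀ S ∈ I, ∀ k ∈ S, ∑ l ∈ Finset.Icc 1 L, y S k l = 1) ∧
       (∀ S ∈ I, ∀ k ∈ S, (r k : ℝ) ≤ ∑ l ∈ Finset.Icc 1 L, (l : ℝ) * y S k l) ∧
       (∀ ω S l, 0 ≤ t ω S l) ∧
       (∀ ω, ∑ S ∈ I, ∑ l ∈ Finset.Icc 1 L, t ω S l ≤ T) ∧
       (∀ ω S l, 0 ≤ p ω S l) ∧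
       (∀ S ∈ I, ∀ k ∈ S, ∀ l ∈ Finset.Icc 1 L,
         (n S : ℝ) * D l * y S k l ≤ R S l k t p)))
    -- Problem (w/o,a) is feasible
    (hfeas : ∃ t p, FeasA t p) :
    (∃ y t p, FeasW y t p) ∧
    sInf {v : ℝ | ∃ y t p, FeasW y t p ∧
        v = E t p + β * ∑ S ∈ I, ∑ k ∈ S, (n S : ℝ) * P k * T *
          ((∑ l ∈ Finset.Icc 1 L, (l : ℝ) * y S k l) - (r k : ℝ))} ≤
      sInf {v : ℝ | ∃ t p, FeasA t p ∧ v = E t p} := by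

  classical
  set y₀ : Finset (Fin K) → Fin K → ℕ → ℝ := fun _ k l => if l = r k then 1 else 0 with hy₀
  have hysum : ∀ k, ∑ l ∈ Finset.Icc 1 L, y₀ ∅ k l = 1 := by
    intro k
    simp only [hy₀]
    rw [Finset.sum_ite_eq' (Finset.Icc 1 L) (r k) (fun _ => (1:ℝ))]
    simp [hr k]
  have hylsum : ∀ k, ∑ l ∈ Finset.Icc 1 L, (l : ℝ) * y₀ ∅ k l = (r k : ℝ) := by
    intro k
    simp only [hy₀, mul_ite, mul_one, mul_zero]
    rw [Finset.sum_ite_eq' (Finset.Icc 1 L) (r k) (fun l => (l:ℝ))]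
    simp [hr k]
  have key : ∀ t p, FeasA t p → FeasW y₀ t p := by
    intro t p hA
    rw [hFeasA] at hA
    obtain ⟨ht0, htT, hp0, hrate⟩ := hA
    have hRnn : ∀ S l k, 0 ≤ R S l k t p := by
      intro S l k
      rw [hR]
      apply mul_nonneg (div_nonneg hB.le hT.le)
      apply Finset.sum_nonneg
      intro ω _
      apply mul_nonneg (hq ω)
      apply mul_nonneg (ht0 ω S l)
      apply Real.logb_nonneg one_lt_two
      have h1 : 0 ≤ p ω S l * h ω k / n₀ :=
        div_nonneg (mul_nonneg (hp0 ω S l) (hh ω k).le) hn₀.le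
      linarith
    rw [hFeasW]
    refine ⟨?_, fun S _ k _ => hysum k, ?_, ht0, htT, hp0, ?_⟩
    · intro S _ k _ l _
      by_cases hlk : l = r k <;> simp [hy₀, hlk]
    · intro S _ k _
      rw [hylsum k]
    · intro S hS k hk l hl
      by_cases hlk : l = r k
      · subst hlk
        simpa [hy₀] using hrate S hS k hk
      · simpa [hy₀, hlk] using hRnn S l k
  obtain ⟨t, p, htp⟩ := hfeas
  refine ⟨⟨y₀, t, p, key t p htp⟩, ?_⟩
  apply csInf_le_csInf
  · refine ⟨0, ?_⟩
    rintro v ⟨y, t', p', hw, rfl⟩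
    rw [hFeasW] at hw
    obtain ⟨hbin, hsum1, hsuml, ht0, htT, hp0, hrate⟩ := hw
    have hEnn : 0 ≤ E t' p' := by
      rw [hE]
      apply Finset.sum_nonneg
      intro ω _
      apply mul_nonneg (hq ω)
      apply Finset.sum_nonneg
      intro S _
      apply Finset.sum_nonneg
      intro l _
      exact mul_nonneg (ht0 ω S l) (hp0 ω S l)
    have htc : 0 ≤ β * ∑ S ∈ I, ∑ k ∈ S, (n S : ℝ) * P k * T *
        ((∑ l ∈ Finset.Icc 1 L, (l : ℝ) * y S k l) - (r k : ℝ)) := by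
      apply mul_nonneg (by linarith)
      apply Finset.sum_nonneg
      intro S hS
      apply Finset.sum_nonneg
      intro k hk
      apply mul_nonneg
      · exact mul_nonneg (mul_nonneg (Nat.cast_nonneg _) (hP k).le) hT.le
      · have := hsuml S hS k hk
        linarith
    linarith
  · exact ⟨E t p, t, p, htp, rfl⟩
  · rintro v ⟨t', p', hA, rfl⟩
    refine ⟨y₀, t', p', key t' p' hA, ?_⟩
    have : ∀ S ∈ I, ∀ k ∈ S, (n S : ℝ) * P k * T *
        ((∑ l ∈ Finset.Icc 1 L, (l : ℝ) * y₀ S k l) - (r k : ℝ)) = 0 := by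
      intro S _ k _
      have : ∑ l ∈ Finset.Icc 1 L, (l : ℝ) * y₀ S k l = (r k : ℝ) := hylsum k
      rw [this]
      ring
    rw [Finset.sum_congr rfl fun S hS => Finset.sum_congr rfl fun k hk => this S hS k hk]
    simp
end

section
/- Fix: positive integers K and L; a nonempty finite collection I of nonempty subsets of {1,...,K}; for each S ∈ I a positive integer n_S; reals 0 < D_1 < D_2 < ... < D_L; for each k ∈ {1,...,K} an integer r_k ∈ {1,...,L}; a nonnegative integer Δ; positive reals B, T, n₀; positive reals P_1,...,P_K; a real β ≥ 1; a nonempty finite set Ω with q : Ω → ℝ satisfying q(ω) ≥ 0 for all ω and Σ_{ω∈Ω} q(ω) = 1; and for each ω ∈ Ω and k ∈ {1,...,K} a positive real h_k(ω). Define E(t,p) := Σ_{ω∈Ω} q(ω) Σ_{S∈I} Σ_{l=1}^L t_{ω,S,l}·p_{ω,S,l} and R_{S,l,k}(t,p) := (B/T) Σ_{ω∈Ω} q(ω)·t_{ω,S,l}·log₂(1 + p_{ω,S,l}·h_k(ω)/n₀). Let Problem (w/o,r) be: minimize E(t,p) over (y,t,p) with y_{S,k,l} ∈ {0,1}, Σ_{l=1}^L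 y_{S,k,l} = 1, r_k ≤ Σ_{l=1}^L l·y_{S,k,l} ≤ r_k + Δ for all S ∈ I, k ∈ S, t_{ω,S,l} ≥ 0, Σ_{S∈I} Σ_{l=1}^L t_{ω,S,l} ≤ T for every ω, p_{ω,S,l} ≥ 0, and n_S·D_l·y_{S,k,l} ≤ R_{S,l,k}(t,p) for all S ∈ I, k ∈ S, l ∈ {1,...,L}; write E^{(w/o,r)} for its infimum. Let Problem (w,r) be: minimize E(t,p) + β Σ_{S∈I} Σ_{k∈S} n_S·P_k·T·(Σ_{l=1}^L l·y_{S,k,l} − x_{S,k}) over (x,y,t,p) with integer x_{S,k} ∈ {1,...,L}, r_k ≤ x_{S,k} ≤ r_k + Δ, y_{S,k,l} ∈ {0,1}, Σ_{l=1}^L y_{S,k,l} = 1, Σ_{l=1}^L l·y_{S,k,l} ≥ x_{S,k} for all S ∈ I, k ∈ S, and the same constraints on (t,p) and the same rate constraints as in Problem (w/o,r); write E^{(w,r)} for its infimum. If the feasible set of Problem (w/o,r) is nonempty, then the feasible set of Problem (w,r) is nonempty and E^{(w,r)} ≤ E^{(w/o,r)}. -/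
/-- part of Theorem 3: if Problem (w/o,r) (without user transcoding,
relative smoothness) is feasible, then Problem (w,r) (with user transcoding, relative
smoothness) is feasible and `E^{(w,r)} ≤ E^{(w/o,r)}`. -/
theorem stmt15 (K L : ℕ) (hK : 0 < K) (hL : 0 < L)
    (I : Finset (Finset (Fin K))) (hI : I.Nonempty) (hIne : ∀ S ∈ I, S.Nonempty)
    (n : Finset (Fin K) → ℕ) (hn : ∀ S ∈ I, 0 < n S)
    (D : ℕ → ℝ) (hD1 : 0 < D 1)
    (hD : ∀ l m : ℕ, 1 ≤ l → l < m → m ≤ L → D l < D m)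
    (r : Fin K → ℕ) (hr : ∀ k, r k ∈ Finset.Icc 1 L) (Δ : ℕ)
    (B T n₀ : ℝ) (hB : 0 < B) (hT : 0 < T) (hn₀ : 0 < n₀)
    (P : Fin K → ℝ) (hP : ∀ k, 0 < P k) (β : ℝ) (hβ : 1 ≤ β)
    (Ω : Type) [Fintype Ω] [Nonempty Ω]
    (q : Ω → ℝ) (hq : ∀ ω, 0 ≤ q ω) (hq1 : ∑ ω, q ω = 1)
    (h : Ω → Fin K → ℝ) (hh : ∀ ω k, 0 < h ω k)
    -- average transmission energy
    (E : (Ω → Finset (Fin K) → ℕ → ℝ) → (Ω → Finset (Fin K) → ℕ → ℝ) → ℝ)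
    (hE : ∀ t p, E t p = ∑ ω, q ω * ∑ S ∈ I, ∑ l ∈ Finset.Icc 1 L, t ω S l * p ω S l)
    -- average transmission rate
    (R : Finset (Fin K) → ℕ → Fin K →
        (Ω → Finset (Fin K) → ℕ → ℝ) → (Ω → Finset (Fin K) → ℕ → ℝ) → ℝ)
    (hR : ∀ S l k t p, R S l k t p =
      (B / T) * ∑ ω, q ω * (t ω S l * Real.logb 2 (1 + p ω S l * h ω k / n₀)))
    -- feasibility for Problem (w/o,r)
    (FeasWO : (Finset (Fin K) → Fin K → ℕ → ℝ) →
        (Ω → Finset (Fin K) → ℕ → ℝ) → (Ω → Finset (Fin K) → ℕ → ℝ) → Prop)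
    (hFeasWO : ∀ y t p, FeasWO y t p ↔
      ((∀ S ∈ I, ∀ k ∈ S, ∀ l ∈ Finset.Icc 1 L, y S k l = 0 ∨ y S k l = 1) ∧
       (∀ S ∈ I, ∀ k ∈ S, ∑ l ∈ Finset.Icc 1 L, y S k l = 1) ∧
       (∀ S ∈ I, ∀ k ∈ S, (r k : ℝ) ≤ ∑ l ∈ Finset.Icc 1 L, (l : ℝ) * y S k l ∧
         (∑ l ∈ Finset.Icc 1 L, (l : ℝ) * y S k l) ≤ ((r k + Δ : ℕ) : ℝ)) ∧
       (∀ ω S l, 0 ≤ t ω S l) ∧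
       (∀ ω, ∑ S ∈ I, ∑ l ∈ Finset.Icc 1 L, t ω S l ≤ T) ∧
       (∀ ω S l, 0 ≤ p ω S l) ∧
       (∀ S ∈ I, ∀ k ∈ S, ∀ l ∈ Finset.Icc 1 L,
         (n S : ℝ) * D l * y S k l ≤ R S l k t p)))
    -- feasibility for Problem (w,r)
    (FeasW : (Finset (Fin K) → Fin K → ℕ) → (Finset (Fin K) → Fin K → ℕ → ℝ) →
        (Ω → Finset (Fin K) → ℕ → ℝ) → (Ω → Finset (Fin K) → ℕ → ℝ) → Prop)
    (hFeasW : ∀ x y t p, FeasW x y t p ↔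
      ((∀ S ∈ I, ∀ k ∈ S, x S k ∈ Finset.Icc 1 L ∧ r k ≤ x S k ∧ x S k ≤ r k + Δ) ∧
       (∀ S ∈ I, ∀ k ∈ S, ∀ l ∈ Finset.Icc 1 L, y S k l = 0 ∨ y S k l = 1) ∧
       (∀ S ∈ I, ∀ k ∈ S, ∑ l ∈ Finset.Icc 1 L, y S k l = 1) ∧
       (∀ S ∈ I, ∀ k ∈ S, (x S k : ℝ) ≤ ∑ l ∈ Finset.Icc 1 L, (l : ℝ) * y S k l) ∧
       (∀ ω S l, 0 ≤ t ω S l) ∧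
       (∀ ω, ∑ S ∈ I, ∑ l ∈ Finset.Icc 1 L, t ω S l ≤ T) ∧
       (∀ ω S l, 0 ≤ p ω S l) ∧
       (∀ S ∈ I, ∀ k ∈ S, ∀ l ∈ Finset.Icc 1 L,
         (n S : ℝ) * D l * y S k l ≤ R S l k t p)))
    -- Problem (w/o,r) is feasible
    (hfeas : ∃ y t p, FeasWO y t p) :
    (∃ x y t p, FeasW x y t p) ∧
    sInf {v : ℝ | ∃ x y t p, FeasW x y t p ∧
        v = E t p + β * ∑ S ∈ I, ∑ k ∈ S, (n S : ℝ) * P k * T *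
          ((∑ l ∈ Finset.Icc 1 L, (l : ℝ) * y S k l) - (x S k : ℝ))} ≤
      sInf {v : ℝ | ∃ y t p, FeasWO y t p ∧ v = E t p} := by
  classical
  -- key construction: from a WO-feasible point build x making FeasW hold with exact cast equality
  have key : ∀ y t p, FeasWO y t p → ∃ x : Finset (Fin K) → Fin K → ℕ,
      FeasW x y t p ∧ ∀ S ∈ I, ∀ k ∈ S,
        (x S k : ℝ) = ∑ l ∈ Finset.Icc 1 L, (l : ℝ) * y S k l := by
    intro y t p hF
    rw [hFeasWO] at hF
    obtain ⟨h01, hsum1, hrq, ht, htT, hp, hrate⟩ := hF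
    refine ⟨fun S k => ∑ l ∈ Finset.Icc 1 L, if y S k l = 1 then l else 0, ?_, ?_⟩
    · rw [hFeasW]
      have hcast : ∀ S ∈ I, ∀ k ∈ S,
          ((∑ l ∈ Finset.Icc 1 L, if y S k l = 1 then l else 0 : ℕ) : ℝ)
            = ∑ l ∈ Finset.Icc 1 L, (l : ℝ) * y S k l := by
        intro S hS k hk
        push_cast
        refine Finset.sum_congr rfl ?_
        intro l hl
        rcases h01 S hS k hk l hl with h' | h' <;> simp [h']
      refine ⟨?_, h01, hsum1, ?_, ht, htT, hp, hrate⟩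
      · intro S hS k hk
        have h1 : (r k : ℝ) ≤ ((∑ l ∈ Finset.Icc 1 L, if y S k l = 1 then l else 0 : ℕ) : ℝ) := by
          rw [hcast S hS k hk]; exact (hrq S hS k hk).1
        have h2 : ((∑ l ∈ Finset.Icc 1 L, if y S k l = 1 then l else 0 : ℕ) : ℝ)
            ≤ ((r k + Δ : ℕ) : ℝ) := by
          rw [hcast S hS k hk]; exact (hrq S hS k hk).2
        have h1' : r k ≤ ∑ l ∈ Finset.Icc 1 L, if y S k l = 1 then l else 0 := by
          exact_mod_cast h1
        have h2' : (∑ l ∈ Finset.Icc 1 L, if y S k l = 1 then l else 0) ≤ r k + Δ := by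
          exact_mod_cast h2
        -- count of selected levels is 1
        have hcnt : (∑ l ∈ Finset.Icc 1 L, if y S k l = 1 then 1 else 0 : ℕ) = 1 := by
          have heq : ((∑ l ∈ Finset.Icc 1 L, if y S k l = 1 then 1 else 0 : ℕ) : ℝ)
              = ∑ l ∈ Finset.Icc 1 L, y S k l := by
            push_cast
            refine Finset.sum_congr rfl ?_
            intro l hl
            rcases h01 S hS k hk l hl with h' | h' <;> simp [h']
          have : ((∑ l ∈ Finset.Icc 1 L, if y S k l = 1 then 1 else 0 : ℕ) : ℝ) = 1 := by
            rw [heq, hsum1 S hS k hk]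
          exact_mod_cast this
        have hxL : (∑ l ∈ Finset.Icc 1 L, if y S k l = 1 then l else 0) ≤ L := by
          calc (∑ l ∈ Finset.Icc 1 L, if y S k l = 1 then l else 0)
              ≤ ∑ l ∈ Finset.Icc 1 L, if y S k l = 1 then L else 0 := by
                refine Finset.sum_le_sum ?_
                intro l hl
                have : l ≤ L := (Finset.mem_Icc.mp hl).2
                split <;> omega
            _ = L * ∑ l ∈ Finset.Icc 1 L, if y S k l = 1 then 1 else 0 := by
                rw [Finset.mul_sum]
                refine Finset.sum_congr rfl ?_
                intro l hl; split <;> simp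
            _ = L := by rw [hcnt]; ring
        have h1L : 1 ≤ ∑ l ∈ Finset.Icc 1 L, if y S k l = 1 then l else 0 := by
          have := (Finset.mem_Icc.mp (hr k)).1
          omega
        exact ⟨Finset.mem_Icc.mpr ⟨h1L, hxL⟩, h1', h2'⟩
      · intro S hS k hk
        rw [hcast S hS k hk]
    · intro S hS k hk
      push_cast
      refine Finset.sum_congr rfl ?_
      intro l hl
      rcases h01 S hS k hk l hl with h' | h' <;> simp [h']
  -- feasibility of (w,r)
  obtain ⟨y0, t0, p0, hF0⟩ := hfeas
  obtain ⟨x0, hFW0, _⟩ := key y0 t0 p0 hF0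
  refine ⟨⟨x0, y0, t0, p0, hFW0⟩, ?_⟩
  -- set inclusion: every WO-value is a W-value
  have hsub : {v : ℝ | ∃ y t p, FeasWO y t p ∧ v = E t p} ⊆
      {v : ℝ | ∃ x y t p, FeasW x y t p ∧
        v = E t p + β * ∑ S ∈ I, ∑ k ∈ S, (n S : ℝ) * P k * T *
          ((∑ l ∈ Finset.Icc 1 L, (l : ℝ) * y S k l) - (x S k : ℝ))} := by
    rintro v ⟨y, t, p, hF, rfl⟩
    obtain ⟨x, hFW, hx⟩ := key y t p hF
    refine ⟨x, y, t, p, hFW, ?_⟩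
    have : ∑ S ∈ I, ∑ k ∈ S, (n S : ℝ) * P k * T *
        ((∑ l ∈ Finset.Icc 1 L, (l : ℝ) * y S k l) - (x S k : ℝ)) = 0 := by
      refine Finset.sum_eq_zero ?_
      intro S hS
      refine Finset.sum_eq_zero ?_
      intro k hk
      rw [← hx S hS k hk]
      ring
    rw [this]; ring
  -- lower bound 0 for the W value set
  have hbdd : BddBelow {v : ℝ | ∃ x y t p, FeasW x y t p ∧
      v = E t p + β * ∑ S ∈ I, ∑ k ∈ S, (n S : ℝ) * P k * T *
        ((∑ l ∈ Finset.Icc 1 L, (l : ℝ) * y S k l) - (x S k : ℝ))} := by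
    refine ⟨0, ?_⟩
    rintro v ⟨x, y, t, p, hFW, rfl⟩
    rw [hFeasW] at hFW
    obtain ⟨hx, h01, hsum1, hxle, ht, htT, hp, hrate⟩ := hFW
    have hE0 : 0 ≤ E t p := by
      rw [hE]
      refine Finset.sum_nonneg ?_
      intro ω _
      refine mul_nonneg (hq ω) (Finset.sum_nonneg ?_)
      intro S _
      refine Finset.sum_nonneg ?_
      intro l _
      exact mul_nonneg (ht ω S l) (hp ω S l)
    have htr : 0 ≤ ∑ S ∈ I, ∑ k ∈ S, (n S : ℝ) * P k * T *
        ((∑ l ∈ Finset.Icc 1 L, (l : ℝ) * y S k l) - (x S k : ℝ)) := by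
      refine Finset.sum_nonneg ?_
      intro S hS
      refine Finset.sum_nonneg ?_
      intro k hk
      refine mul_nonneg (mul_nonneg (mul_nonneg (Nat.cast_nonneg _) (hP k).le) hT.le) ?_
      have := hxle S hS k hk
      linarith
    have hβ0 : (0:ℝ) ≤ β := by linarith
    nlinarith [mul_nonneg hβ0 htr]
  have hne : {v : ℝ | ∃ y t p, FeasWO y t p ∧ v = E t p}.Nonempty :=
    ⟨E t0 p0, y0, t0, p0, hF0, rfl⟩
  exact csInf_le_csInf hbdd hne hsub
end
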